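/- arXiv:2201.10638 — 4 statements merged into one kernel-verified Lean document; each statement's English description precedes it below -/
import Mathlib

section
/- Let A ∈ ℝ^{N×r} with N > r and rank(A) = r, let B ∈ ℝ^{N×n}, let U_A ∈ ℝ^{N×r} be an orthonormal basis for the column space of A, let X_opt = argmin_X ‖AX − B‖_F², let R² = ‖A X_opt − B‖_F², and let B^⊥ = B − U_A U_Aᵀ B. Suppose a matrix S ∈ ℝ^{s×N} satisfies the structural conditions (SC1) σ_min²(S U_A) ≥ 1/√2 and (SC2) ‖U_Aᵀ Sᵀ S B^⊥‖_F² ≤ ε R²/2 for some ε ∈ (0,1). Then the solution X̃_opt = argmin_X ‖S A X − S B‖_F² of the sketched problem satisfies ‖A X̃_opt − B‖_F² ≤ (1 + ε) ‖A X_opt − B‖_F². -/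
open Matrix MeasureTheory

/-- Squared Frobenius norm of a real matrix. -/
noncomputable def frobSq {m n : Type*} [Fintype m] [Fintype n] (M : Matrix m n ℝ) : ℝ :=
  ∑ i, ∑ j, (M i j) ^ 2

/-- Square of the smallest singular value of a matrix, as the infimum of
squared norms `‖M x‖₂²` over unit vectors `x`. -/
noncomputable def sigmaMinSq {m n : Type*} [Fintype m] [Fintype n] (M : Matrix m n ℝ) : ℝ :=
  sInf {c : ℝ | ∃ x : n → ℝ, ∑ i, (x i) ^ 2 = 1 ∧ c = ∑ j, (M.mulVec x j) ^ 2}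

/-- Square of the largest singular value of a matrix. -/
noncomputable def sigmaMaxSq {m n : Type*} [Fintype m] [Fintype n] (M : Matrix m n ℝ) : ℝ :=
  sSup {c : ℝ | ∃ x : n → ℝ, ∑ i, (x i) ^ 2 = 1 ∧ c = ∑ j, (M.mulVec x j) ^ 2}

namespace SketchAux

variable {m n k : Type*} [Fintype m] [Fintype n] [Fintype k]

noncomputable def ip (M N : Matrix m n ℝ) : ℝ := ∑ i, ∑ j, M i j * N i j

lemma frobSq_eq_ip (M : Matrix m n ℝ) : frobSq M = ip M M := by
  simp [frobSq, ip, sq]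

lemma frobSq_nonneg (M : Matrix m n ℝ) : 0 ≤ frobSq M :=
  Finset.sum_nonneg fun _ _ => Finset.sum_nonneg fun _ _ => sq_nonneg _

lemma frobSq_eq_zero {M : Matrix m n ℝ} (h : frobSq M = 0) : M = 0 := by
  ext i j
  have h1 : ∀ i ∈ Finset.univ, (0:ℝ) ≤ ∑ j, (M i j)^2 :=
    fun _ _ => Finset.sum_nonneg fun _ _ => sq_nonneg _
  have h2 := (Finset.sum_eq_zero_iff_of_nonneg h1).mp h i (Finset.mem_univ i)
  have h3 := (Finset.sum_eq_zero_iff_of_nonneg (fun _ _ => sq_nonneg _)).mp h2 j (Finset.mem_univ j)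
  exact pow_eq_zero_iff two_ne_zero |>.mp h3

lemma ip_eq_trace (M N : Matrix m n ℝ) : ip M N = (Mᵀ * N).trace := by
  rw [ip, Finset.sum_comm]
  simp [Matrix.trace, Matrix.diag, Matrix.mul_apply]

lemma ip_mul_right (P : Matrix m k ℝ) (D : Matrix k n ℝ) (R : Matrix m n ℝ) :
    ip (P * D) R = ip D (Pᵀ * R) := by
  rw [ip_eq_trace, ip_eq_trace, Matrix.transpose_mul, Matrix.mul_assoc]

lemma ip_comm (M N : Matrix m n ℝ) : ip M N = ip N M := by
  simp [ip, mul_comm]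

lemma ip_smul_right (t : ℝ) (M N : Matrix m n ℝ) : ip M (t • N) = t * ip M N := by
  simp [ip, Finset.mul_sum, mul_left_comm]

lemma frobSq_smul (t : ℝ) (M : Matrix m n ℝ) : frobSq (t • M) = t^2 * frobSq M := by
  simp [frobSq, mul_pow, Finset.mul_sum]

lemma frobSq_add (M N : Matrix m n ℝ) :
    frobSq (M + N) = frobSq M + 2 * ip M N + frobSq N := by
  simp only [frobSq, ip, Matrix.add_apply, add_sq, Finset.sum_add_distrib, Finset.mul_sum]
  ring

lemma frobSq_sub (M N : Matrix m n ℝ) :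
    frobSq (M - N) = frobSq M - 2 * ip M N + frobSq N := by
  have := frobSq_add M (-N)
  simp only [← sub_eq_add_neg] at this
  have h1 : ip M (-N) = - ip M N := by simp [SketchAux.ip, mul_comm]
  have h2 : frobSq (-N) = frobSq N := by simp [frobSq]
  rw [this, h1, h2]; ring

end SketchAux

namespace SketchAux

variable {m n k : Type*} [Fintype m] [Fintype n] [Fintype k]

lemma normal_eq (P : Matrix m k ℝ) (Q : Matrix m n ℝ) (X0 : Matrix k n ℝ)
    (h : ∀ X : Matrix k n ℝ, frobSq (P * X0 - Q) ≤ frobSq (P * X - Q)) :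
    Pᵀ * (P * X0 - Q) = 0 := by
  set R := P * X0 - Q with hR
  set G := Pᵀ * R with hGdef
  have key : ∀ t : ℝ, 0 ≤ 2 * (t * ip R (P * G)) + t ^ 2 * frobSq (P * G) := by
    intro t
    have h1 := h (X0 + t • G)
    have e : P * (X0 + t • G) - Q = R + t • (P * G) := by
      rw [Matrix.mul_add, Matrix.mul_smul, hR]; abel
    rw [e, frobSq_add, ip_smul_right, frobSq_smul] at h1
    linarith
  have hb : ip R (P * G) = 0 := by
    by_contra hb0
    set b := ip R (P * G) with hbdef
    set c := frobSq (P * G) with hcdef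
    have hc : 0 ≤ c := frobSq_nonneg _
    have hc1 : (0:ℝ) < c + 1 := by linarith
    have hk := key (-b / (c + 1))
    have hb2 : 0 < b ^ 2 := by positivity
    have expand : 2 * (-b / (c + 1) * b) + (-b / (c + 1)) ^ 2 * c
        = (b ^ 2 * (-(c + 2))) / (c + 1) ^ 2 := by
      field_simp
      ring
    rw [expand] at hk
    have hneg : (b ^ 2 * (-(c + 2))) / (c + 1) ^ 2 < 0 := by
      apply div_neg_of_neg_of_pos
      · have : 0 < b ^ 2 := by positivity
        nlinarith
      · positivity
    linarith
  have hGG : ip G G = 0 := by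
    rw [← ip_mul_right P G R, ip_comm, hb]
  have : frobSq G = 0 := by rw [frobSq_eq_ip]; exact hGG
  exact frobSq_eq_zero this

lemma rayleigh (T : Matrix m k ℝ) (w : k → ℝ) :
    ∑ i, w i * ((Tᵀ * T).mulVec w) i = ∑ j, (T.mulVec w j) ^ 2 := by
  have h : ∑ i, w i * ((Tᵀ * T).mulVec w) i = w ⬝ᵥ ((Tᵀ * T) *ᵥ w) := rfl
  rw [h, ← Matrix.mulVec_mulVec, Matrix.dotProduct_mulVec, Matrix.vecMul_transpose]
  simp [dotProduct, sq]

lemma frobSq_col (M : Matrix m n ℝ) : frobSq M = ∑ j, ∑ i, (M i j) ^ 2 :=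
  Finset.sum_comm

lemma col_mul (M : Matrix m k ℝ) (W : Matrix k n ℝ) (j : n) :
    (fun i => (M * W) i j) = M.mulVec (fun i => W i j) := by
  funext i
  simp [Matrix.mul_apply, Matrix.mulVec, dotProduct]

lemma sigmaMinSq_mul_le (M : Matrix m k ℝ) (w : k → ℝ) :
    sigmaMinSq M * (∑ i, w i ^ 2) ≤ ∑ j, (M.mulVec w j) ^ 2 := by
  rcases eq_or_ne (∑ i, w i ^ 2) 0 with h0 | h0
  · rw [h0, mul_zero]
    exact Finset.sum_nonneg fun _ _ => sq_nonneg _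
  · have ha : 0 < ∑ i, w i ^ 2 :=
      lt_of_le_of_ne (Finset.sum_nonneg fun _ _ => sq_nonneg _) (Ne.symm h0)
    set a := ∑ i, w i ^ 2 with hadef
    set x := (Real.sqrt a)⁻¹ • w with hxdef
    have hsa : Real.sqrt a ^ 2 = a := Real.sq_sqrt ha.le
    have hsa0 : Real.sqrt a ≠ 0 := by positivity
    have hx : ∑ i, x i ^ 2 = 1 := by
      simp only [hxdef, Pi.smul_apply, smul_eq_mul, mul_pow, ← Finset.mul_sum, ← hadef]
      rw [inv_pow, hsa, inv_mul_cancel₀ ha.ne']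
    have hbdd : BddBelow {c : ℝ | ∃ x : k → ℝ, ∑ i, x i ^ 2 = 1 ∧ c = ∑ j, (M.mulVec x j) ^ 2} := by
      refine ⟨0, fun c hc => ?_⟩
      obtain ⟨y, _, hy⟩ := hc
      exact hy ▸ Finset.sum_nonneg fun _ _ => sq_nonneg _
    have hmem : (∑ j, (M.mulVec x j) ^ 2) ∈
        {c : ℝ | ∃ x : k → ℝ, ∑ i, x i ^ 2 = 1 ∧ c = ∑ j, (M.mulVec x j) ^ 2} := ⟨x, hx, rfl⟩
    have hinf : sigmaMinSq M ≤ ∑ j, (M.mulVec x j) ^ 2 := csInf_le hbdd hmem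
    have hMx : ∑ j, (M.mulVec x j) ^ 2 = a⁻¹ * ∑ j, (M.mulVec w j) ^ 2 := by
      simp only [hxdef, Matrix.mulVec_smul, Pi.smul_apply, smul_eq_mul, mul_pow,
        ← Finset.mul_sum, inv_pow, hsa]
    calc sigmaMinSq M * a ≤ (a⁻¹ * ∑ j, (M.mulVec w j) ^ 2) * a :=
          mul_le_mul_of_nonneg_right (hMx ▸ hinf) ha.le
      _ = ∑ j, (M.mulVec w j) ^ 2 := by field_simp

lemma scalar_bound {a b p : ℝ} (ha : 0 ≤ a) (hb : 0 ≤ b)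
    (hlow : 1 / Real.sqrt 2 * a ≤ p) (hCS : p ^ 2 ≤ a * b) : a ≤ 2 * b := by
  have hs2 : Real.sqrt 2 * Real.sqrt 2 = 2 := Real.mul_self_sqrt (by norm_num)
  have hs2pos : (0:ℝ) < Real.sqrt 2 := by positivity
  have hpa : a ≤ Real.sqrt 2 * p := by
    have h1 : Real.sqrt 2 * (1 / Real.sqrt 2 * a) ≤ Real.sqrt 2 * p :=
      mul_le_mul_of_nonneg_left hlow hs2pos.le
    have h2 : Real.sqrt 2 * (1 / Real.sqrt 2 * a) = a := by
      field_simp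
    linarith
  have hp0 : 0 ≤ p := le_trans (by positivity) hlow
  have h3 : a * a ≤ (Real.sqrt 2 * p) * (Real.sqrt 2 * p) := mul_self_le_mul_self ha hpa
  have h4 : (Real.sqrt 2 * p) * (Real.sqrt 2 * p) = 2 * (p * p) := by
    rw [show (Real.sqrt 2 * p) * (Real.sqrt 2 * p) = (Real.sqrt 2 * Real.sqrt 2) * (p * p) by ring, hs2]
  have haa : a * a ≤ 2 * (a * b) := by nlinarith
  rcases eq_or_lt_of_le ha with h | h
  · rw [← h]; linarith
  · nlinarith

end SketchAux

set_option maxHeartbeats 1000000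
open SketchAux

/-- Theorem 3.1, residual bound under the structural conditions.
If the sketching matrix `S` satisfies (SC1) `σ_min²(S U_A) ≥ 1/√2` and
(SC2) `‖U_Aᵀ Sᵀ S B^⊥‖_F² ≤ ε R²/2` for some `ε ∈ (0,1)`, then any solution `X̃_opt`
of the sketched least squares problem satisfies
`‖A X̃_opt − B‖_F² ≤ (1+ε) ‖A X_opt − B‖_F²`. -/
theorem sketched_residual_bound {N r n s : ℕ} (hNr : r < N)
    (A : Matrix (Fin N) (Fin r) ℝ) (hA : A.rank = r)
    (B : Matrix (Fin N) (Fin n) ℝ)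
    (U : Matrix (Fin N) (Fin r) ℝ) (hU : Uᵀ * U = 1)
    (hrange : LinearMap.range A.mulVecLin = LinearMap.range U.mulVecLin)
    (Xopt : Matrix (Fin r) (Fin n) ℝ)
    (hXopt : ∀ X : Matrix (Fin r) (Fin n) ℝ, frobSq (A * Xopt - B) ≤ frobSq (A * X - B))
    (Rsq : ℝ) (hRsq : Rsq = frobSq (A * Xopt - B))
    (Bperp : Matrix (Fin N) (Fin n) ℝ) (hBperp : Bperp = B - U * (Uᵀ * B))
    (ε : ℝ) (hε : ε ∈ Set.Ioo (0 : ℝ) 1)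
    (S : Matrix (Fin s) (Fin N) ℝ)
    (hSC1 : sigmaMinSq (S * U) ≥ 1 / Real.sqrt 2)
    (hSC2 : frobSq (Uᵀ * Sᵀ * (S * Bperp)) ≤ ε * Rsq / 2)
    (Xtopt : Matrix (Fin r) (Fin n) ℝ)
    (hXtopt : ∀ X : Matrix (Fin r) (Fin n) ℝ,
      frobSq (S * A * Xtopt - S * B) ≤ frobSq (S * A * X - S * B)) :
    frobSq (A * Xtopt - B) ≤ (1 + ε) * frobSq (A * Xopt - B) := by
  set C := Uᵀ * A with hCdef
  -- A = U * C
  have hAUC : A = U * C := by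
    ext i j
    have hmem : A.mulVecLin (Pi.single j 1) ∈ LinearMap.range U.mulVecLin := by
      rw [← hrange]; exact LinearMap.mem_range_self _ _
    obtain ⟨y, hy⟩ := hmem
    have hy' : U.mulVec y = A.mulVec (Pi.single j 1) := hy
    have hUy : Uᵀ.mulVec (U.mulVec y) = y := by
      rw [Matrix.mulVec_mulVec, hU, Matrix.one_mulVec]
    have h2 : (U * C).mulVec (Pi.single j 1) = A.mulVec (Pi.single j 1) := by
      rw [← Matrix.mulVec_mulVec, hCdef, ← Matrix.mulVec_mulVec, ← hy', hUy, hy']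
    have := congrFun h2 i
    simpa [Matrix.mulVec_single] using this.symm
  -- rank of C
  have hCrank : C.rank = r := by
    refine le_antisymm (by simpa using C.rank_le_card_width) ?_
    have h1 : A.rank ≤ C.rank := by
      conv_lhs => rw [hAUC]
      exact Matrix.rank_mul_le_right _ _
    omega
  -- Cᵀ-cancellation
  have hinj : Function.Injective Cᵀ.mulVecLin := by
    rw [← LinearMap.ker_eq_bot, ← Submodule.finrank_eq_zero]
    have h1 := Cᵀ.mulVecLin.finrank_range_add_finrank_ker
    have h2 : Module.finrank ℝ (LinearMap.range Cᵀ.mulVecLin) = r := by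
      have : Cᵀ.rank = r := by rw [Matrix.rank_transpose, hCrank]
      simpa [Matrix.rank] using this
    have h3 : Module.finrank ℝ (Fin r → ℝ) = r := by simp
    omega
  have hCTinj : ∀ M : Matrix (Fin r) (Fin n) ℝ, Cᵀ * M = 0 → M = 0 := by
    intro M hM
    ext i j
    have hcol : Cᵀ.mulVecLin (fun i => M i j) = Cᵀ.mulVecLin 0 := by
      have h1 : Cᵀ.mulVec (fun i => M i j) = fun i' => (Cᵀ * M) i' j := (col_mul Cᵀ M j).symm
      rw [map_zero, Matrix.mulVecLin_apply, h1, hM]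
      funext i'
      simp
    have := congrFun (hinj hcol) i
    simpa using this
  have hAtoU : ∀ M : Matrix (Fin N) (Fin n) ℝ, Aᵀ * M = 0 → Uᵀ * M = 0 := by
    intro M hM
    apply hCTinj
    have hAT : Aᵀ = Cᵀ * Uᵀ := by rw [hAUC, Matrix.transpose_mul]
    calc Cᵀ * (Uᵀ * M) = (Cᵀ * Uᵀ) * M := (Matrix.mul_assoc _ _ _).symm
      _ = Aᵀ * M := by rw [← hAT]
      _ = 0 := hM
  -- exact least squares solution
  have hNA : Aᵀ * (A * Xopt - B) = 0 := normal_eq A B Xopt hXopt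
  have hURopt : Uᵀ * (A * Xopt - B) = 0 := hAtoU _ hNA
  have hCXopt : C * Xopt = Uᵀ * B := by
    have h := hURopt
    rw [Matrix.mul_sub, ← Matrix.mul_assoc, ← hCdef, sub_eq_zero] at h
    exact h
  have hAXopt : A * Xopt - B = -Bperp := by
    rw [hBperp]
    conv_lhs => rw [hAUC]
    rw [Matrix.mul_assoc, hCXopt]
    abel
  -- sketched normal equations
  have hNS := normal_eq (S * A) (S * B) Xtopt hXtopt
  have hNS' : Aᵀ * (Sᵀ * (S * (A * Xtopt - B))) = 0 := by
    simp only [Matrix.transpose_mul, Matrix.mul_sub, Matrix.mul_assoc] at hNS ⊢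
    exact hNS
  have hUSS : Uᵀ * (Sᵀ * (S * (A * Xtopt - B))) = 0 := hAtoU _ hNS'
  -- decomposition
  set W := C * Xtopt - Uᵀ * B with hWdef
  set E := Uᵀ * (Sᵀ * (S * Bperp)) with hEdef
  have hdecomp : A * Xtopt - B = U * W - Bperp := by
    rw [hBperp, hWdef, Matrix.mul_sub]
    conv_lhs => rw [hAUC]
    rw [Matrix.mul_assoc]
    abel
  have hME : ((S * U)ᵀ * (S * U)) * W = E := by
    have h := hUSS
    rw [hdecomp] at h
    simp only [Matrix.mul_sub] at h
    have h2 := sub_eq_zero.mp h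
    rw [hEdef]
    rw [← h2]
    simp only [Matrix.transpose_mul, Matrix.mul_assoc]
  -- columnwise bound : frobSq W ≤ 2 * frobSq E
  have hcolbound : ∀ j : Fin n, ∑ i, (W i j) ^ 2 ≤ 2 * ∑ i, (E i j) ^ 2 := by
    intro j
    have hcol : ((S * U)ᵀ * (S * U)).mulVec (fun i => W i j) = fun i => E i j := by
      rw [← col_mul, hME]
    have ha : (0:ℝ) ≤ ∑ i, (W i j) ^ 2 := Finset.sum_nonneg fun _ _ => sq_nonneg _
    have hb : (0:ℝ) ≤ ∑ i, (E i j) ^ 2 := Finset.sum_nonneg fun _ _ => sq_nonneg _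
    have hlow : 1 / Real.sqrt 2 * ∑ i, (W i j) ^ 2 ≤ ∑ i, W i j * E i j := by
      calc 1 / Real.sqrt 2 * ∑ i, (W i j) ^ 2
          ≤ sigmaMinSq (S * U) * ∑ i, (W i j) ^ 2 :=
            mul_le_mul_of_nonneg_right hSC1 ha
        _ ≤ ∑ j', ((S * U).mulVec (fun i => W i j) j') ^ 2 := sigmaMinSq_mul_le _ _
        _ = ∑ i, (fun i => W i j) i * (((S * U)ᵀ * (S * U)).mulVec (fun i => W i j)) i :=
            (rayleigh _ _).symm
        _ = ∑ i, W i j * E i j := by rw [hcol]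
    have hCS : (∑ i, W i j * E i j) ^ 2 ≤ (∑ i, (W i j) ^ 2) * (∑ i, (E i j) ^ 2) := by
      simpa using Finset.sum_mul_sq_le_sq_mul_sq Finset.univ (fun i => W i j) (fun i => E i j)
    exact scalar_bound ha hb hlow hCS
  have hWE : frobSq W ≤ 2 * frobSq E := by
    rw [frobSq_col W, frobSq_col E, Finset.mul_sum]
    exact Finset.sum_le_sum fun j _ => hcolbound j
  -- Pythagoras
  have hUBperp : Uᵀ * Bperp = 0 := by
    rw [hBperp, Matrix.mul_sub, ← Matrix.mul_assoc, hU, Matrix.one_mul, sub_self]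
  have hipUWB : ip (U * W) Bperp = 0 := by
    rw [ip_mul_right, hUBperp]
    simp [SketchAux.ip]
  have hUW : frobSq (U * W) = frobSq W := by
    rw [frobSq_eq_ip, ip_mul_right, ← Matrix.mul_assoc, hU, Matrix.one_mul, ← frobSq_eq_ip]
  have hBperpR : frobSq Bperp = Rsq := by
    rw [hRsq, hAXopt]
    simp [frobSq]
  have hpyth : frobSq (A * Xtopt - B) = frobSq W + Rsq := by
    rw [hdecomp, frobSq_sub, hipUWB, hUW, hBperpR]
    ring
  -- finish
  have hE2 : frobSq E ≤ ε * Rsq / 2 := by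
    rw [hEdef, ← Matrix.mul_assoc]
    exact hSC2
  rw [hpyth, ← hRsq]
  linarith [hWE, hE2]
end

section
/- Let A ∈ ℝ^{N×r} with N > r and rank(A) = r, let B ∈ ℝ^{N×n}, let U_A ∈ ℝ^{N×r} be an orthonormal basis for the column space of A, let X_opt = argmin_X ‖AX − B‖_F², let R² = ‖A X_opt − B‖_F², and let B^⊥ = B − U_A U_Aᵀ B. Suppose a matrix S ∈ ℝ^{s×N} satisfies (SC1) σ_min²(S U_A) ≥ 1/√2 and (SC2) ‖U_Aᵀ Sᵀ S B^⊥‖_F² ≤ ε R²/2 for some ε ∈ (0,1). Then the solution X̃_opt = argmin_X ‖S A X − S B‖_F² of the sketched problem satisfies ‖X_opt − X̃_opt‖_F² ≤ ε ‖A X_opt − B‖_F² / σ_min²(A). -/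
open Matrix MeasureTheory

/-!
Put `D = X̃_opt − X_opt` and `Z = U_Aᵀ A D`, so that `A D = U_A Z` and `‖A D‖_F = ‖Z‖_F`.
The normal equations of the full problem show that its residual `A X_opt − B` is `−B^⊥`;
those of the sketched problem then give `‖S U_A Z‖_F² = ⟨Z, U_Aᵀ Sᵀ S B^⊥⟩`. By (SC1) and
Cauchy–Schwarz, `‖Z‖_F² / 2 ≤ ‖U_Aᵀ Sᵀ S B^⊥‖_F² ≤ ε R² / 2` by (SC2), and finally
`σ_min²(A) ‖D‖_F² ≤ ‖A D‖_F² = ‖Z‖_F²`, where `σ_min(A) > 0` because `A` has a left inverse.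
-/

section Rank

variable {m n : Type*} [Fintype n] {K : Type*} [Field K]

lemma Matrix.mulVecLin_injective_of_rank_eq_card {M : Matrix m n K}
    (hM : M.rank = Fintype.card n) : Function.Injective M.mulVecLin := by
  have h := LinearMap.finrank_range_add_finrank_ker M.mulVecLin
  rw [← Matrix.rank, hM, Module.finrank_fintype_fun_eq_card, add_eq_left,
    Submodule.finrank_eq_zero] at h
  exact LinearMap.ker_eq_bot.mp h

lemma Matrix.exists_mul_eq_one_of_rank_eq_card [Fintype m] [DecidableEq n] [LinearOrder K]
    [IsStrictOrderedRing K] {M : Matrix m n K} (hM : M.rank = Fintype.card n) :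
    ∃ L : Matrix n m K, L * M = 1 := by
  have hG : IsUnit (Mᵀ * M) := mulVec_injective_iff_isUnit.mp <|
    mulVecLin_injective_of_rank_eq_card (by rw [rank_transpose_mul_self, hM])
  exact ⟨(Mᵀ * M)⁻¹ * Mᵀ, by
    rw [Matrix.mul_assoc, nonsing_inv_mul _ ((isUnit_iff_isUnit_det _).mp hG)]⟩

end Rank

section Frobenius

variable {m n p : Type*} [Fintype m] [Fintype n] [Fintype p]

lemma frobSq_nonneg (M : Matrix m n ℝ) : 0 ≤ frobSq M := by
  unfold frobSq; positivity

lemma frobSq_eq_sum_prod (M : Matrix m n ℝ) : frobSq M = ∑ x : m × n, M x.1 x.2 ^ 2 :=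
  (Fintype.sum_prod_type fun x : m × n => M x.1 x.2 ^ 2).symm

lemma frobSq_eq_zero_iff {M : Matrix m n ℝ} : frobSq M = 0 ↔ M = 0 := by
  rw [frobSq_eq_sum_prod, Fintype.sum_eq_zero_iff_of_nonneg fun _ => sq_nonneg _]
  simp [funext_iff, ← Matrix.ext_iff]

lemma frobSq_sub_comm (M N : Matrix m n ℝ) : frobSq (M - N) = frobSq (N - M) := by
  rw [← neg_sub, frobSq_eq_sum_prod, frobSq_eq_sum_prod]
  simp only [Matrix.neg_apply, neg_sq]

lemma trace_transpose_mul_eq_sum_prod (M N : Matrix m n ℝ) :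
    (Mᵀ * N).trace = ∑ x : m × n, M x.1 x.2 * N x.1 x.2 := by
  simp only [trace, diag, mul_apply, transpose_apply, Fintype.sum_prod_type]
  exact Finset.sum_comm

lemma frobSq_eq_trace (M : Matrix m n ℝ) : frobSq M = (Mᵀ * M).trace := by
  simp only [frobSq_eq_sum_prod, trace_transpose_mul_eq_sum_prod, sq]

lemma trace_transpose_mul_sq_le (M N : Matrix m n ℝ) :
    (Mᵀ * N).trace ^ 2 ≤ frobSq M * frobSq N := by
  rw [trace_transpose_mul_eq_sum_prod, frobSq_eq_sum_prod, frobSq_eq_sum_prod]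
  exact Finset.sum_mul_sq_le_sq_mul_sq _ _ _

lemma frobSq_sub_smul (R M : Matrix m n ℝ) (t : ℝ) :
    frobSq (R - t • M) = frobSq R - 2 * t * (Mᵀ * R).trace + t ^ 2 * frobSq M := by
  simp only [frobSq_eq_sum_prod, trace_transpose_mul_eq_sum_prod, Matrix.sub_apply,
    Matrix.smul_apply, smul_eq_mul, Finset.mul_sum, ← Finset.sum_sub_distrib,
    ← Finset.sum_add_distrib]
  exact Finset.sum_congr rfl fun _ _ => by ring

lemma frobSq_mul_of_transpose_mul_self_eq_one [DecidableEq p] {U : Matrix m p ℝ}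
    (hU : Uᵀ * U = 1) (Z : Matrix p n ℝ) : frobSq (U * Z) = frobSq Z := by
  rw [frobSq_eq_trace, frobSq_eq_trace Z, transpose_mul, Matrix.mul_assoc,
    ← Matrix.mul_assoc Uᵀ, hU, Matrix.one_mul]

lemma transpose_mul_sub_eq_zero_of_forall_frobSq_le {A : Matrix m p ℝ} {B : Matrix m n ℝ}
    {X₀ : Matrix p n ℝ} (h : ∀ X : Matrix p n ℝ, frobSq (A * X₀ - B) ≤ frobSq (A * X - B)) :
    Aᵀ * (A * X₀ - B) = 0 := by
  set G := Aᵀ * (A * X₀ - B)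
  -- moving `X₀` along `-G` changes the objective by a quadratic in `t` with linear term `-2‖G‖²t`
  have hquad : ∀ t : ℝ, 0 ≤ frobSq (A * G) * (t * t) + (-2 * frobSq G) * t + 0 := by
    intro t
    have ht := h (X₀ - t • G)
    rw [Matrix.mul_sub, Matrix.mul_smul, sub_right_comm, frobSq_sub_smul, transpose_mul,
      Matrix.mul_assoc, ← frobSq_eq_trace] at ht
    nlinarith
  have hdiscr : (-2 * frobSq G) ^ 2 - 4 * frobSq (A * G) * 0 ≤ 0 := discrim_le_zero hquad
  exact frobSq_eq_zero_iff.mp (pow_eq_zero_iff two_ne_zero |>.mp (by nlinarith))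

end Frobenius

section SingularValue

variable {m n p : Type*} [Fintype m] [Fintype n] [Fintype p]

lemma bddBelow_sigmaMinSq_set (M : Matrix m n ℝ) :
    BddBelow {c : ℝ | ∃ x : n → ℝ, ∑ i, x i ^ 2 = 1 ∧ c = ∑ j, (M *ᵥ x) j ^ 2} :=
  ⟨0, by rintro c ⟨x, -, rfl⟩; positivity⟩

lemma sigmaMinSq_nonneg (M : Matrix m n ℝ) : 0 ≤ sigmaMinSq M :=
  Real.sInf_nonneg <| by rintro c ⟨x, -, rfl⟩; positivity

lemma sum_sq_smul (a : ℝ) (v : n → ℝ) : ∑ i, (a • v) i ^ 2 = a ^ 2 * ∑ i, v i ^ 2 := by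
  simp only [Pi.smul_apply, smul_eq_mul, mul_pow, Finset.mul_sum]

lemma sigmaMinSq_mul_sum_sq_le (M : Matrix m n ℝ) (x : n → ℝ) :
    sigmaMinSq M * ∑ i, x i ^ 2 ≤ ∑ j, (M *ᵥ x) j ^ 2 := by
  set c := ∑ i, x i ^ 2
  rcases (show 0 ≤ c by positivity).eq_or_lt with hc | hc
  · rw [← hc, mul_zero]; positivity
  have hs : (Real.sqrt c)⁻¹ ^ 2 = c⁻¹ := by rw [inv_pow, Real.sq_sqrt hc.le]
  have hunit : ∑ i, ((Real.sqrt c)⁻¹ • x) i ^ 2 = 1 := by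
    rw [sum_sq_smul, hs, inv_mul_cancel₀ hc.ne']
  have hle := csInf_le (bddBelow_sigmaMinSq_set M) ⟨_, hunit, rfl⟩
  rw [mulVec_smul, sum_sq_smul, hs] at hle
  rwa [← le_div_iff₀ hc, div_eq_inv_mul]

lemma sigmaMinSq_mul_frobSq_le (M : Matrix m p ℝ) (Z : Matrix p n ℝ) :
    sigmaMinSq M * frobSq Z ≤ frobSq (M * Z) := by
  rw [frobSq, frobSq, Finset.sum_comm, Finset.sum_comm (f := fun i j => (M * Z) i j ^ 2),
    Finset.mul_sum]
  exact Finset.sum_le_sum fun j _ => sigmaMinSq_mul_sum_sq_le M (fun k => Z k j)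

lemma sum_sq_mulVec_le (L : Matrix m n ℝ) (v : n → ℝ) :
    ∑ i, (L *ᵥ v) i ^ 2 ≤ frobSq L * ∑ j, v j ^ 2 := by
  rw [frobSq, Finset.sum_mul]
  exact Finset.sum_le_sum fun i _ => Finset.sum_mul_sq_le_sq_mul_sq _ _ _

lemma sigmaMinSq_pos_of_mul_eq_one [DecidableEq n] [Nonempty n] {M : Matrix m n ℝ}
    {L : Matrix n m ℝ} (hLM : L * M = 1) : 0 < sigmaMinSq M := by
  have hbound : ∀ x : n → ℝ, ∑ i, x i ^ 2 = 1 → 1 ≤ frobSq L * ∑ j, (M *ᵥ x) j ^ 2 := by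
    intro x hx
    simpa [hx, mulVec_mulVec, hLM] using sum_sq_mulVec_le L (M *ᵥ x)
  obtain ⟨i⟩ := ‹Nonempty n›
  have hunit : ∑ j, (Pi.single i 1 : n → ℝ) j ^ 2 = 1 := by simp [Pi.single_apply]
  have hL : 0 < frobSq L := by
    have := hbound _ hunit
    exact (frobSq_nonneg L).lt_of_ne (by rintro h; rw [← h, zero_mul] at this; linarith)
  refine (inv_pos.mpr hL).trans_le (le_csInf ⟨_, _, hunit, rfl⟩ ?_)
  rintro c ⟨x, hx, rfl⟩
  exact (inv_le_iff_one_le_mul₀' hL).mpr (hbound x hx)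

lemma frobSq_le_frobSq_mul_div_sigmaMinSq [DecidableEq p] {A : Matrix m p ℝ}
    (hA : A.rank = Fintype.card p) (D : Matrix p n ℝ) :
    frobSq D ≤ frobSq (A * D) / sigmaMinSq A := by
  cases isEmpty_or_nonempty p
  · rw [frobSq, Finset.univ_eq_empty, Finset.sum_empty]
    exact div_nonneg (frobSq_nonneg _) (sigmaMinSq_nonneg A)
  · obtain ⟨L, hL⟩ := exists_mul_eq_one_of_rank_eq_card hA
    rw [le_div_iff₀ (sigmaMinSq_pos_of_mul_eq_one hL), mul_comm]
    exact sigmaMinSq_mul_frobSq_le A D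

end SingularValue

lemma Matrix.exists_mul_eq_of_range_mulVecLin_le {m p q R : Type*} [Fintype p] [Fintype q]
    [DecidableEq p] [CommSemiring R] {A : Matrix m p R} {U : Matrix m q R}
    (h : LinearMap.range A.mulVecLin ≤ LinearMap.range U.mulVecLin) :
    ∃ Y : Matrix q p R, U * Y = A := by
  have hcol : ∀ j, ∃ y, U *ᵥ y = fun i => A i j := fun j =>
    h ⟨Pi.single j 1, by rw [mulVecLin_apply, mulVec_single_one]; rfl⟩
  choose y hy using hcol
  refine ⟨(Matrix.of y)ᵀ, Matrix.ext fun i j => ?_⟩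
  simpa only [mul_apply, transpose_apply, of_apply, mulVec, dotProduct] using congrFun (hy j) i

lemma Matrix.mul_transpose_mul_of_range_le {m p q : Type*} [Fintype m] [Fintype p] [Fintype q]
    [DecidableEq p] [DecidableEq q] {A : Matrix m p ℝ} {U : Matrix m q ℝ}
    (hU : Uᵀ * U = 1) (h : LinearMap.range A.mulVecLin ≤ LinearMap.range U.mulVecLin) :
    U * (Uᵀ * A) = A := by
  obtain ⟨Y, rfl⟩ := exists_mul_eq_of_range_mulVecLin_le h
  rw [← Matrix.mul_assoc Uᵀ, hU, Matrix.one_mul]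

lemma mul_sub_eq_neg_sub_mul_transpose_mul {m n p q : Type*} [Fintype m] [Fintype p]
    [Fintype q] [DecidableEq p] [DecidableEq q] {A : Matrix m p ℝ} {U : Matrix m q ℝ}
    {B : Matrix m n ℝ} {X : Matrix p n ℝ} (hU : Uᵀ * U = 1)
    (hrange : LinearMap.range A.mulVecLin = LinearMap.range U.mulVecLin)
    (hX : Aᵀ * (A * X - B) = 0) : A * X - B = -(B - U * (Uᵀ * B)) := by
  obtain ⟨W, hW⟩ := exists_mul_eq_of_range_mulVecLin_le hrange.ge
  have hUX : Uᵀ * (A * X) = Uᵀ * B := by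
    rw [← sub_eq_zero, ← Matrix.mul_sub, ← hW, transpose_mul, Matrix.mul_assoc, hX,
      Matrix.mul_zero]
  rw [← hUX, ← Matrix.mul_assoc Uᵀ, ← Matrix.mul_assoc U,
    mul_transpose_mul_of_range_le hU hrange.le, neg_sub]

section Sketch

variable {k m n p q : Type*} [Fintype k] [Fintype m] [Fintype n] [Fintype p] [Fintype q]

lemma frobSq_mul_eq_trace_of_sketched_normal_eq {S : Matrix k m ℝ} {A : Matrix m p ℝ}
    {U : Matrix m q ℝ} {B Bp : Matrix m n ℝ} {X Y : Matrix p n ℝ} {Z : Matrix q n ℝ}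
    (hX : A * X - B = -Bp) (hUZ : A * (Y - X) = U * Z)
    (hY : (S * A)ᵀ * (S * A * Y - S * B) = 0) :
    frobSq (S * (U * Z)) = (Zᵀ * (Uᵀ * Sᵀ * (S * Bp))).trace := by
  obtain rfl : Bp = B - A * X := by rw [← neg_sub, hX, neg_neg]
  have hres : S * A * Y - S * B = S * (U * Z) - S * (B - A * X) := by
    rw [← hUZ]; simp only [Matrix.mul_sub, Matrix.mul_assoc]; abel
  have horth : (S * (U * Z))ᵀ * (S * (U * Z)) = (S * (U * Z))ᵀ * (S * (B - A * X)) := by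
    rw [← sub_eq_zero, ← Matrix.mul_sub, ← hres, ← hUZ, ← Matrix.mul_assoc S A,
      transpose_mul, Matrix.mul_assoc, hY, Matrix.mul_zero]
  rw [frobSq_eq_trace, horth]
  simp only [transpose_mul, Matrix.mul_assoc]

lemma sigmaMinSq_sq_mul_frobSq_le {M : Matrix m q ℝ} {Z C : Matrix q n ℝ}
    (h : frobSq (M * Z) = (Zᵀ * C).trace) : sigmaMinSq M ^ 2 * frobSq Z ≤ frobSq C := by
  rcases (frobSq_nonneg Z).eq_or_lt with hZ | hZ
  · rw [← hZ, mul_zero]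
    exact frobSq_nonneg C
  have hsq : (sigmaMinSq M * frobSq Z) ^ 2 ≤ frobSq Z * frobSq C :=
    calc (sigmaMinSq M * frobSq Z) ^ 2 ≤ frobSq (M * Z) ^ 2 :=
          pow_le_pow_left₀ (mul_nonneg (sigmaMinSq_nonneg M) hZ.le)
            (sigmaMinSq_mul_frobSq_le M Z) 2
      _ ≤ frobSq Z * frobSq C := h ▸ trace_transpose_mul_sq_le Z C
  exact le_of_mul_le_mul_left (by linarith) hZ

end Sketch

theorem sketched_solution_bound_general {N r n s : ℕ}
    (A : Matrix (Fin N) (Fin r) ℝ) (hA : A.rank = r)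
    (B : Matrix (Fin N) (Fin n) ℝ)
    (U : Matrix (Fin N) (Fin r) ℝ) (hU : Uᵀ * U = 1)
    (hrange : LinearMap.range A.mulVecLin = LinearMap.range U.mulVecLin)
    (Xopt : Matrix (Fin r) (Fin n) ℝ)
    (hXopt : ∀ X : Matrix (Fin r) (Fin n) ℝ, frobSq (A * Xopt - B) ≤ frobSq (A * X - B))
    (Rsq : ℝ) (hRsq : Rsq = frobSq (A * Xopt - B))
    (Bperp : Matrix (Fin N) (Fin n) ℝ) (hBperp : Bperp = B - U * (Uᵀ * B))
    (ε : ℝ)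
    (S : Matrix (Fin s) (Fin N) ℝ)
    (hSC1 : sigmaMinSq (S * U) ≥ 1 / Real.sqrt 2)
    (hSC2 : frobSq (Uᵀ * Sᵀ * (S * Bperp)) ≤ ε * Rsq / 2)
    (Xtopt : Matrix (Fin r) (Fin n) ℝ)
    (hXtopt : ∀ X : Matrix (Fin r) (Fin n) ℝ,
      frobSq (S * A * Xtopt - S * B) ≤ frobSq (S * A * X - S * B)) :
    frobSq (Xopt - Xtopt) ≤ ε * frobSq (A * Xopt - B) / sigmaMinSq A := by
  have hres : A * Xopt - B = -Bperp := hBperp ▸ mul_sub_eq_neg_sub_mul_transpose_mul hU hrange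
    (transpose_mul_sub_eq_zero_of_forall_frobSq_le hXopt)
  have hAD : A * (Xtopt - Xopt) = U * (Uᵀ * (A * (Xtopt - Xopt))) := by
    rw [← Matrix.mul_assoc Uᵀ, ← Matrix.mul_assoc U, mul_transpose_mul_of_range_le hU hrange.le]
  set Z := Uᵀ * (A * (Xtopt - Xopt))
  have hsketch := frobSq_mul_eq_trace_of_sketched_normal_eq hres hAD
    (transpose_mul_sub_eq_zero_of_forall_frobSq_le (A := S * A) hXtopt)
  have hSC1_sq : 1 / 2 ≤ sigmaMinSq (S * U) ^ 2 :=
    calc (1 : ℝ) / 2 = (1 / Real.sqrt 2) ^ 2 := by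
          rw [div_pow, Real.sq_sqrt zero_le_two, one_pow]
      _ ≤ sigmaMinSq (S * U) ^ 2 := pow_le_pow_left₀ (by positivity) hSC1 2
  have hZ : frobSq Z ≤ ε * Rsq := by
    have := sigmaMinSq_sq_mul_frobSq_le (M := S * U) (Matrix.mul_assoc S U Z ▸ hsketch)
    nlinarith [frobSq_nonneg Z]
  calc frobSq (Xopt - Xtopt) = frobSq (Xtopt - Xopt) := frobSq_sub_comm _ _
    _ ≤ frobSq (A * (Xtopt - Xopt)) / sigmaMinSq A :=
        frobSq_le_frobSq_mul_div_sigmaMinSq (by rw [hA, Fintype.card_fin]) _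
    _ = frobSq Z / sigmaMinSq A := by rw [hAD, frobSq_mul_of_transpose_mul_self_eq_one hU]
    _ ≤ ε * frobSq (A * Xopt - B) / sigmaMinSq A :=
        div_le_div_of_nonneg_right (hRsq ▸ hZ) (sigmaMinSq_nonneg A)

/-- Theorem 3.1, solution bound under the structural conditions.
If `S` satisfies (SC1) and (SC2) for some `ε ∈ (0,1)`, then any solution `X̃_opt` of
the sketched problem satisfies `‖X_opt − X̃_opt‖_F² ≤ ε ‖A X_opt − B‖_F² / σ_min²(A)`. -/
theorem sketched_solution_bound {N r n s : ℕ} (hNr : r < N)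
    (A : Matrix (Fin N) (Fin r) ℝ) (hA : A.rank = r)
    (B : Matrix (Fin N) (Fin n) ℝ)
    (U : Matrix (Fin N) (Fin r) ℝ) (hU : Uᵀ * U = 1)
    (hrange : LinearMap.range A.mulVecLin = LinearMap.range U.mulVecLin)
    (Xopt : Matrix (Fin r) (Fin n) ℝ)
    (hXopt : ∀ X : Matrix (Fin r) (Fin n) ℝ, frobSq (A * Xopt - B) ≤ frobSq (A * X - B))
    (Rsq : ℝ) (hRsq : Rsq = frobSq (A * Xopt - B))
    (Bperp : Matrix (Fin N) (Fin n) ℝ) (hBperp : Bperp = B - U * (Uᵀ * B))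
    (ε : ℝ) (hε : ε ∈ Set.Ioo (0 : ℝ) 1)
    (S : Matrix (Fin s) (Fin N) ℝ)
    (hSC1 : sigmaMinSq (S * U) ≥ 1 / Real.sqrt 2)
    (hSC2 : frobSq (Uᵀ * Sᵀ * (S * Bperp)) ≤ ε * Rsq / 2)
    (Xtopt : Matrix (Fin r) (Fin n) ℝ)
    (hXtopt : ∀ X : Matrix (Fin r) (Fin n) ℝ,
      frobSq (S * A * Xtopt - S * B) ≤ frobSq (S * A * X - S * B)) :
    frobSq (Xopt - Xtopt) ≤ ε * frobSq (A * Xopt - B) / sigmaMinSq A :=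
  sketched_solution_bound_general A hA B U hU hrange Xopt hXopt Rsq hRsq Bperp hBperp ε S hSC1 hSC2
    Xtopt hXtopt
end

section
/- Let A ∈ ℝ^{n×m} and B ∈ ℝ^{n×p}, let p ∈ [0,1]^n be a probability distribution with p_k > 0 for every k such that row k of A or B is nonzero, and let S ∈ ℝ^{s×n} be the row sampling and rescaling matrix built from s i.i.d. indices drawn from p. Then for each fixed (i,j), the variance of the (i,j) entry of the approximate product satisfies Var[((S A)ᵀ S B)_{ij}] = Σ_{k=1}^n A_{ki}² B_{kj}²/(s p_k) − (AᵀB)_{ij}²/s. -/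
open Matrix MeasureTheory

/-- The weighted row-sampling ("RandSample") matrix determined by the sampled
indices `ξ : Fin s → Fin N` and the sampling probabilities `p`:
`S j i = 1/√(s pᵢ)` if `ξ j = i` and `0` otherwise. -/
noncomputable def randSampleMatrix {N : ℕ} (s : ℕ) (p : Fin N → ℝ) (ξ : Fin s → Fin N) :
    Matrix (Fin s) (Fin N) ℝ :=
  fun j i => if ξ j = i then 1 / Real.sqrt (s * p i) else 0

/-- The measure on `Fin N` in which index `i` has probability `p i`. -/
noncomputable def sampleMeasure {N : ℕ} (p : Fin N → ℝ) : Measure (Fin N) :=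
  ∑ i, ENNReal.ofReal (p i) • Measure.dirac i

/-- The law of `s` i.i.d. indices, each drawn from the distribution `p` on `Fin N`. -/
noncomputable def sampleMeasurePi {N : ℕ} (s : ℕ) (p : Fin N → ℝ) :
    Measure (Fin s → Fin N) :=
  Measure.pi fun _ => sampleMeasure p

/-!
Writing `g k = A_{ki} B_{kj} / (s p_k)`, the entry `((SA)ᵀ SB)_{ij}` equals `∑_t g(ξ_t)`, a sum of
`s` independent copies of `g` under `p`. Its variance is therefore `s · Var_p[g]
= s (∑_k p_k g_k² - (∑_k p_k g_k)²)`, which simplifies to the claimed formula because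
`A_{ki} B_{kj} = 0` whenever `p_k = 0`, so that `p_k g_k = A_{ki} B_{kj} / s` for every `k`.
-/

open ProbabilityTheory

section SampleMeasure

variable {N : ℕ} {p : Fin N → ℝ}

lemma integral_sampleMeasure (hp0 : ∀ k, 0 ≤ p k) (f : Fin N → ℝ) :
    ∫ k, f k ∂sampleMeasure p = ∑ k, p k * f k := by
  rw [sampleMeasure, integral_finsetSum_measure fun k _ =>
    Integrable.of_finite.smul_measure ENNReal.ofReal_ne_top]
  refine Finset.sum_congr rfl fun k _ => ?_
  rw [integral_smul_measure, integral_dirac, ENNReal.toReal_ofReal (hp0 k), smul_eq_mul]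

lemma isProbabilityMeasure_sampleMeasure (hp0 : ∀ k, 0 ≤ p k) (hp1 : ∑ k, p k = 1) :
    IsProbabilityMeasure (sampleMeasure p) := by
  constructor
  simp only [sampleMeasure, Measure.coe_finsetSum, Finset.sum_apply, Measure.smul_apply,
    measure_univ, smul_eq_mul, mul_one]
  rw [← ENNReal.ofReal_sum_of_nonneg fun k _ => hp0 k, hp1, ENNReal.ofReal_one]

lemma variance_sampleMeasure (hp0 : ∀ k, 0 ≤ p k) (hp1 : ∑ k, p k = 1) (f : Fin N → ℝ) :
    Var[f; sampleMeasure p] = ∑ k, p k * f k ^ 2 - (∑ k, p k * f k) ^ 2 := by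
  have := isProbabilityMeasure_sampleMeasure hp0 hp1
  rw [variance_eq_sub .of_discrete, integral_sampleMeasure hp0, integral_sampleMeasure hp0]
  rfl

end SampleMeasure

lemma randSampleMatrix_transpose_mul_apply {n m q s : ℕ} {p : Fin n → ℝ} (hp0 : ∀ k, 0 ≤ p k)
    (A : Matrix (Fin n) (Fin m) ℝ) (B : Matrix (Fin n) (Fin q) ℝ) (i : Fin m) (j : Fin q)
    (ξ : Fin s → Fin n) :
    ((randSampleMatrix s p ξ * A)ᵀ * (randSampleMatrix s p ξ * B)) i j
      = ∑ t, A (ξ t) i * B (ξ t) j / (s * p (ξ t)) := by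
  simp only [mul_apply, transpose_apply, randSampleMatrix, ite_mul, zero_mul,
    Finset.sum_ite_eq, Finset.mem_univ, if_true]
  refine Finset.sum_congr rfl fun t _ => ?_
  set r := Real.sqrt (s * p (ξ t)) with hr
  calc 1 / r * A (ξ t) i * (1 / r * B (ξ t) j) = A (ξ t) i * B (ξ t) j / r ^ 2 := by ring
    _ = _ := by rw [hr, Real.sq_sqrt (mul_nonneg s.cast_nonneg (hp0 _))]

lemma mul_weighted_variance_div_mul {ι : Type*} [Fintype ι] (s : ℝ) (p c : ι → ℝ)
    (hc : ∀ k, p k = 0 → c k = 0) :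
    s * (∑ k, p k * (c k / (s * p k)) ^ 2 - (∑ k, p k * (c k / (s * p k))) ^ 2)
      = ∑ k, c k ^ 2 / (s * p k) - (∑ k, c k) ^ 2 / s := by
  rcases eq_or_ne s 0 with rfl | hs
  · simp
  have h1 : ∀ k, p k * (c k / (s * p k)) = c k / s := fun k => by
    rcases eq_or_ne (p k) 0 with hp | hp
    · simp [hp, hc k hp]
    · field_simp
  have h2 : ∀ k, p k * (c k / (s * p k)) ^ 2 = c k ^ 2 / (s * p k) / s := fun k => by
    rcases eq_or_ne (p k) 0 with hp | hp
    · simp [hp, hc k hp]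
    · field_simp
  simp only [h1, h2, ← Finset.sum_div]
  field_simp

theorem randomized_matmul_entry_variance_general {n m q s : ℕ}
    (A : Matrix (Fin n) (Fin m) ℝ) (B : Matrix (Fin n) (Fin q) ℝ)
    (p : Fin n → ℝ) (hp0 : ∀ k, 0 ≤ p k) (hp1 : ∑ k, p k = 1)
    (hpos : ∀ k, (A k ≠ 0 ∨ B k ≠ 0) → 0 < p k)
    (i : Fin m) (j : Fin q) :
    (∫ ξ, (((randSampleMatrix s p ξ * A)ᵀ * (randSampleMatrix s p ξ * B)) i j) ^ 2
        ∂(sampleMeasurePi s p))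
      - (∫ ξ, ((randSampleMatrix s p ξ * A)ᵀ * (randSampleMatrix s p ξ * B)) i j
          ∂(sampleMeasurePi s p)) ^ 2
      = (∑ k, (A k i) ^ 2 * (B k j) ^ 2 / (s * p k)) - ((Aᵀ * B) i j) ^ 2 / s := by
  have := isProbabilityMeasure_sampleMeasure hp0 hp1
  unfold sampleMeasurePi
  set c : Fin n → ℝ := fun k => A k i * B k j
  have hc : ∀ k, p k = 0 → c k = 0 := fun k hk => by
    have hA : A k = 0 := by
      by_contra h
      exact (hpos k (.inl h)).ne' hk
    simp [c, hA]
  have hentry : (fun ξ => ((randSampleMatrix s p ξ * A)ᵀ * (randSampleMatrix s p ξ * B)) i j)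
      = ∑ t : Fin s, fun ξ => c (ξ t) / (s * p (ξ t)) := by
    funext ξ
    rw [Finset.sum_apply, randSampleMatrix_transpose_mul_apply hp0]
  calc _ = Var[fun ξ => ((randSampleMatrix s p ξ * A)ᵀ * (randSampleMatrix s p ξ * B)) i j;
        Measure.pi fun _ => sampleMeasure p] := (variance_eq_sub .of_discrete).symm
    _ = s * Var[fun k => c k / (s * p k); sampleMeasure p] := by
      rw [hentry, variance_sum_pi (X := fun _ k => c k / (s * p k))
        fun _ => .of_discrete]
      simp
    _ = _ := by
      rw [variance_sampleMeasure hp0 hp1, mul_weighted_variance_div_mul _ _ _ hc]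
      simp [c, mul_apply, mul_pow]

/-- variance of an entry of the randomized matrix product.
For each fixed `(i,j)`,
`Var[((SA)ᵀ SB)_{ij}] = Σ_k A_{ki}² B_{kj}²/(s p_k) − (AᵀB)_{ij}²/s`,
where the variance is `E[X²] − (E[X])²`. -/
theorem randomized_matmul_entry_variance {n m q s : ℕ} (hs : 0 < s)
    (A : Matrix (Fin n) (Fin m) ℝ) (B : Matrix (Fin n) (Fin q) ℝ)
    (p : Fin n → ℝ) (hp0 : ∀ k, 0 ≤ p k) (hp1 : ∑ k, p k = 1)
    (hpos : ∀ k, (A k ≠ 0 ∨ B k ≠ 0) → 0 < p k)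
    (i : Fin m) (j : Fin q) :
    (∫ ξ, (((randSampleMatrix s p ξ * A)ᵀ * (randSampleMatrix s p ξ * B)) i j) ^ 2
        ∂(sampleMeasurePi s p))
      - (∫ ξ, ((randSampleMatrix s p ξ * A)ᵀ * (randSampleMatrix s p ξ * B)) i j
          ∂(sampleMeasurePi s p)) ^ 2
      = (∑ k, (A k i) ^ 2 * (B k j) ^ 2 / (s * p k)) - ((Aᵀ * B) i j) ^ 2 / s :=
  randomized_matmul_entry_variance_general A B p hp0 hp1 hpos i j
end

section
/- Let U ∈ ℝ^{N×r} have orthonormal columns, let B^⊥ ∈ ℝ^{N×n} satisfy Uᵀ B^⊥ = 0, let R² = ‖B^⊥‖_F², and let S ∈ ℝ^{s×N} satisfy (SC1) σ_min²(S U) ≥ 1/√2 and (SC2) ‖Uᵀ Sᵀ S B^⊥‖_F² ≤ ε R²/2 for some ε ∈ (0,1). Let Y_opt ∈ ℝ^{r×n} be arbitrary and let Ỹ_opt = argmin_Y ‖S U (Y − Y_opt) − S B^⊥‖_F² (equivalently, Ỹ_opt satisfies the normal equation (S U)ᵀ S U (Ỹ_opt − Y_opt) = (S U)ᵀ S B^⊥).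 Then ‖Ỹ_opt − Y_opt‖_F² ≤ ε R². -/
open Matrix MeasureTheory

/-- Homogeneous form of the smallest-singular-value bound. -/
lemma sigmaMinSq_bound {m n : Type*} [Fintype m] [Fintype n] (A : Matrix m n ℝ) (c : ℝ)
    (hc : 0 ≤ c) (h : sigmaMinSq A ≥ c) (x : n → ℝ) :
    c * ∑ i, (x i) ^ 2 ≤ ∑ j, (A.mulVec x j) ^ 2 := by
  by_cases hx : ∑ i, (x i) ^ 2 = 0
  · have hx0 : x = 0 := by
      funext i
      have := (Finset.sum_eq_zero_iff_of_nonneg (fun i _ => sq_nonneg (x i))).mp hx i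
        (Finset.mem_univ i)
      exact pow_eq_zero_iff (by norm_num) |>.mp this
    simp [hx0, Matrix.mulVec_zero, hx]
  · have hpos : 0 < ∑ i, (x i) ^ 2 := lt_of_le_of_ne (by positivity) (Ne.symm hx)
    set t : ℝ := Real.sqrt (∑ i, (x i) ^ 2) with ht
    have htpos : 0 < t := Real.sqrt_pos.mpr hpos
    set y : n → ℝ := fun i => t⁻¹ * x i with hy
    have hy1 : ∑ i, (y i) ^ 2 = 1 := by
      simp only [hy, mul_pow, ← Finset.mul_sum]
      rw [ht]
      rw [inv_pow, Real.sq_sqrt hpos.le]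
      field_simp
    have hmem : (∑ j, (A.mulVec y j) ^ 2) ∈
        {c : ℝ | ∃ x : n → ℝ, ∑ i, (x i) ^ 2 = 1 ∧ c = ∑ j, (A.mulVec x j) ^ 2} :=
      ⟨y, hy1, rfl⟩
    have hbdd : BddBelow {c : ℝ | ∃ x : n → ℝ, ∑ i, (x i) ^ 2 = 1 ∧ c = ∑ j, (A.mulVec x j) ^ 2} := by
      refine ⟨0, fun z hz => ?_⟩
      obtain ⟨w, -, rfl⟩ := hz
      positivity
    have hle : c ≤ ∑ j, (A.mulVec y j) ^ 2 := le_trans h (csInf_le hbdd hmem)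
    have hAy : ∀ j, A.mulVec y j = t⁻¹ * A.mulVec x j := by
      intro j
      simp only [hy, Matrix.mulVec, dotProduct, Finset.mul_sum]
      congr 1; funext i; ring
    have hsum : ∑ j, (A.mulVec y j) ^ 2 = (t ^ 2)⁻¹ * ∑ j, (A.mulVec x j) ^ 2 := by
      simp only [hAy, mul_pow, ← Finset.mul_sum, inv_pow]
    rw [hsum] at hle
    have ht2 : t ^ 2 = ∑ i, (x i) ^ 2 := Real.sq_sqrt hpos.le
    rw [ht2] at hle
    calc c * ∑ i, (x i) ^ 2 ≤ ((∑ i, (x i) ^ 2)⁻¹ * ∑ j, (A.mulVec x j) ^ 2) * ∑ i, (x i) ^ 2 :=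
          mul_le_mul_of_nonneg_right hle hpos.le
      _ = ∑ j, (A.mulVec x j) ^ 2 := by field_simp

set_option maxHeartbeats 1000000 in
/-- key inequality `‖Ỹ_opt − Y_opt‖_F² ≤ ε R²` from the proof of
Theorem 3.1. If `U` has orthonormal columns, `Uᵀ B^⊥ = 0`, `S` satisfies (SC1) and
(SC2), and `Ỹ_opt` satisfies the normal equation
`(SU)ᵀ SU (Ỹ_opt − Y_opt) = (SU)ᵀ S B^⊥`, then `‖Ỹ_opt − Y_opt‖_F² ≤ ε R²`. -/
theorem normal_equation_solution_bound {N r n s : ℕ}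
    (U : Matrix (Fin N) (Fin r) ℝ) (hU : Uᵀ * U = 1)
    (Bperp : Matrix (Fin N) (Fin n) ℝ) (hperp : Uᵀ * Bperp = 0)
    (Rsq : ℝ) (hRsq : Rsq = frobSq Bperp)
    (ε : ℝ) (hε : ε ∈ Set.Ioo (0 : ℝ) 1)
    (S : Matrix (Fin s) (Fin N) ℝ)
    (hSC1 : sigmaMinSq (S * U) ≥ 1 / Real.sqrt 2)
    (hSC2 : frobSq (Uᵀ * Sᵀ * (S * Bperp)) ≤ ε * Rsq / 2)
    (Yopt Ytopt : Matrix (Fin r) (Fin n) ℝ)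
    (hnormal : (S * U)ᵀ * (S * U) * (Ytopt - Yopt) = (S * U)ᵀ * (S * Bperp)) :
    frobSq (Ytopt - Yopt) ≤ ε * Rsq := by
  set A := S * U with hA
  set E := Ytopt - Yopt with hE
  set M := Aᵀ * A with hM
  have hc : (0:ℝ) ≤ 1 / Real.sqrt 2 := by positivity
  -- key pointwise bound: for each vector x, ‖M x‖² ≥ (1/2) ‖x‖²
  have key : ∀ x : Fin r → ℝ,
      (1/2 : ℝ) * ∑ i, (x i) ^ 2 ≤ ∑ j, (M.mulVec x j) ^ 2 := by
    intro x
    have h1 := sigmaMinSq_bound A (1 / Real.sqrt 2) hc hSC1 x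
    -- x ⬝ᵥ M.mulVec x = ∑ j, (A.mulVec x j)^2
    have hdot : x ⬝ᵥ M.mulVec x = ∑ j, (A.mulVec x j) ^ 2 := by
      rw [hM, ← Matrix.mulVec_mulVec, Matrix.dotProduct_mulVec, Matrix.vecMul_transpose]
      simp [dotProduct, sq]
    -- Cauchy–Schwarz: (x ⬝ᵥ Mx)² ≤ (∑ x²)(∑ (Mx)²)
    have hcs : (x ⬝ᵥ M.mulVec x) ^ 2 ≤ (∑ i, (x i) ^ 2) * ∑ j, (M.mulVec x j) ^ 2 := by
      exact Finset.sum_mul_sq_le_sq_mul_sq Finset.univ x (M.mulVec x)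
    have hlhs : ((1 / Real.sqrt 2) * ∑ i, (x i) ^ 2) ^ 2 ≤ (x ⬝ᵥ M.mulVec x) ^ 2 := by
      have h0 : 0 ≤ (1 / Real.sqrt 2) * ∑ i, (x i) ^ 2 := by positivity
      have := hdot ▸ h1
      exact pow_le_pow_left₀ h0 this 2
    have hcomb := le_trans hlhs hcs
    have hsq2 : (1 / Real.sqrt 2) ^ 2 = 1 / 2 := by
      rw [div_pow, Real.sq_sqrt (by norm_num : (0:ℝ) ≤ 2)]; norm_num
    by_cases hx : ∑ i, (x i) ^ 2 = 0
    · rw [hx]; simp; positivity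
    · have hpos : 0 < ∑ i, (x i) ^ 2 := lt_of_le_of_ne (by positivity) (Ne.symm hx)
      have : (1/2 : ℝ) * (∑ i, (x i) ^ 2) ^ 2 ≤ (∑ i, (x i) ^ 2) * ∑ j, (M.mulVec x j) ^ 2 := by
        calc (1/2 : ℝ) * (∑ i, (x i) ^ 2) ^ 2
            = ((1 / Real.sqrt 2) * ∑ i, (x i) ^ 2) ^ 2 := by rw [mul_pow, hsq2]
          _ ≤ _ := hcomb
      nlinarith [this, hpos]
  -- sum over columns
  have hME : M * E = Uᵀ * Sᵀ * (S * Bperp) := by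
    rw [hnormal, hA, Matrix.transpose_mul, Matrix.mul_assoc]
  have hcol : ∀ j, ∀ i, (M * E) i j = M.mulVec (fun k => E k j) i := by
    intro j i
    simp [Matrix.mul_apply, Matrix.mulVec, dotProduct]
  have hfrob : (1/2 : ℝ) * frobSq E ≤ frobSq (M * E) := by
    have l1 : frobSq E = ∑ j, ∑ i, (E i j) ^ 2 := Finset.sum_comm
    have l2 : frobSq (M * E) = ∑ j, ∑ i, ((M * E) i j) ^ 2 := Finset.sum_comm
    rw [l1, l2, Finset.mul_sum]
    apply Finset.sum_le_sum
    intro j _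
    have hk := key (fun k => E k j)
    calc (1/2 : ℝ) * ∑ i, (E i j) ^ 2 ≤ ∑ i, (M.mulVec (fun k => E k j) i) ^ 2 := hk
      _ = ∑ i, ((M * E) i j) ^ 2 := by
          apply Finset.sum_congr rfl
          intro i _
          rw [hcol j i]
  have : frobSq (M * E) ≤ ε * Rsq / 2 := hME ▸ hSC2
  linarith [hfrob]
end
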